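/- Let A = k[[t^a, t^{a+1}]] with a ≥ 5 odd, write a = 2ℓ+1 with ℓ ≥ 2. Let 0 ≤ r ≤ ℓ, s = aℓ + r, Q = (t^s), and I = Q : 𝔪^{a−1}. Then the associated graded ring G(I) = ⊕_{n≥0} I^n/I^{n+1} is Cohen–Macaulay if and only if r = 0 or r = ℓ. -/

import Mathlib

/-!
All ideals involved are monomial. For `G ⊆ H`, an element lies in the ideal generated by the
`t^g`, `g ∈ G`, iff its support lies in `G + H`; the conductor of `H` makes every semigroup ideal
finitely generated, which gives the nontrivial direction. So everything reduces to arithmetic in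
`H = ⟨a, a+1⟩ = {u a + ρ | ρ ≤ u}`, where `𝔪^j` has exponent set `orderGE a j = {u a + ρ | ρ ≤ u,
j ≤ u}` and, since the exponents `(a-1)a + i` (`i < a`) of `𝔪^{a-1}` meet every residue class, `I`
has exponent set `E = H ∩ [s, ∞)`.

For `r = 0` (resp. `r = ℓ`) one finds `E = {s} ∪ orderGE a j` with `j = ℓ` (resp. `ℓ + 1`), i.e.
`I = Q + 𝔪^j`. Then `Q ∩ I^{n+1} = Q I^n` follows by the modular law from
`Q ∩ 𝔪^{j(n+1)} ⊆ Q 𝔪^{jn}`, a comparison of quotients and remainders modulo `a`.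

For `0 < r < ℓ`, `m = 3s + 2(ℓ-r) + 1 = 2(s + ℓ - r) + (s + 1)` is an exponent of `Q ∩ I³`, but
not of `Q I²`: an exponent `s + δ ∈ E` with `δ ≤ 2(ℓ-r) + 1` has `δ ≤ ℓ - r`, and the elements
of `H` below `a` are `0`.
-/

set_option maxHeartbeats 1000000
set_option synthInstance.maxHeartbeats 1000000

open PowerSeries

/-- The numerical semigroup ring `k[[H]]`: power series supported on `H`. -/
noncomputable def ssr (k : Type) [Field k] (H : AddSubmonoid ℕ) :
    Subalgebra k (PowerSeries k) where
  carrier := {f | ∀ n : ℕ, n ∉ H → PowerSeries.coeff n f = 0}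
  mul_mem' := by
    intro f g hf hg n hn
    rw [Set.mem_setOf_eq] at hf hg
    rw [PowerSeries.coeff_mul]
    apply Finset.sum_eq_zero
    rintro ⟨i, j⟩ hij
    replace hij : i + j = n := by simpa using hij
    by_cases hi : i ∈ H
    · have hj : j ∉ H := fun hj => hn (hij ▸ H.add_mem hi hj)
      rw [hg j hj, mul_zero]
    · rw [hf i hi, zero_mul]
  add_mem' := by
    intro f g hf hg n hn
    rw [Set.mem_setOf_eq] at hf hg
    rw [map_add, hf n hn, hg n hn, add_zero]
  one_mem' := by
    intro n hn
    have h0 : n ≠ 0 := fun h => hn (by rw [h]; exact H.zero_mem)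
    simp [PowerSeries.coeff_one, h0]
  zero_mem' := by
    intro n _
    simp
  algebraMap_mem' := by
    intro r n hn
    have h0 : n ≠ 0 := fun h => hn (by rw [h]; exact H.zero_mem)
    simp [PowerSeries.algebraMap_apply, PowerSeries.coeff_C, h0]

/-- The monomial `t^n` as an element of `k[[H]]`, for `n ∈ H`. -/
noncomputable def tp (k : Type) [Field k] (H : AddSubmonoid ℕ) (n : ℕ) (hn : n ∈ H) :
    ssr k H :=
  ⟨PowerSeries.X ^ n, by
    intro m hm
    rw [PowerSeries.coeff_X_pow]
    exact if_neg (fun h => hm (by rw [h]; exact hn))⟩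

/-- The maximal ideal of `k[[H]]`, generated by the monomials `t^n`, `0 < n ∈ H`. -/
noncomputable def mIdeal (k : Type) [Field k] (H : AddSubmonoid ℕ) : Ideal (ssr k H) :=
  Ideal.span {x | ∃ n : ℕ, ∃ hn : n ∈ H, 0 < n ∧ x = tp k H n hn}

open scoped Pointwise

def orderGE (a j : ℕ) : Set ℕ := {n | ∃ u ρ, ρ ≤ u ∧ j ≤ u ∧ n = u * a + ρ}

section orderGE

variable {a : ℕ}

theorem orderGE_add_subset (a i j : ℕ) : orderGE a i + orderGE a j ⊆ orderGE a (i + j) := by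
  rintro _ ⟨_, ⟨u, ρ, hρ, hu, rfl⟩, _, ⟨v, σ, hσ, hv, rfl⟩, rfl⟩
  exact ⟨u + v, ρ + σ, by omega, by omega, by ring⟩

theorem zero_mem_orderGE_zero (a : ℕ) : 0 ∈ orderGE a 0 :=
  ⟨0, 0, le_rfl, le_rfl, by ring⟩

theorem pair_subset_orderGE_one (a : ℕ) : {a, a + 1} ⊆ orderGE a 1 := by
  rintro _ (rfl | rfl)
  · exact ⟨1, 0, Nat.zero_le _, le_rfl, by ring⟩
  · exact ⟨1, 1, le_rfl, le_rfl, by ring⟩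

theorem mul_le_of_mem_orderGE {n j : ℕ} (hn : n ∈ orderGE a j) : j * a ≤ n := by
  obtain ⟨u, ρ, -, hu, rfl⟩ := hn
  exact (Nat.mul_le_mul_right a hu).trans (Nat.le_add_right _ _)

theorem orderGE_anti {i j : ℕ} (h : i ≤ j) : orderGE a j ⊆ orderGE a i :=
  fun _ ⟨u, ρ, hρ, hu, hn⟩ => ⟨u, ρ, hρ, h.trans hu, hn⟩

theorem coe_closure_pair (a : ℕ) :
    (AddSubmonoid.closure {a, a + 1} : Set ℕ) = orderGE a 0 := by
  ext n
  constructor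
  · intro hn
    induction hn using AddSubmonoid.closure_induction with
    | mem x hx => exact orderGE_anti (Nat.zero_le 1) (pair_subset_orderGE_one a hx)
    | zero => exact zero_mem_orderGE_zero a
    | add x y _ _ hx hy => exact orderGE_add_subset a 0 0 ⟨x, hx, y, hy, rfl⟩
  · rintro ⟨u, ρ, hρ, -, rfl⟩
    obtain ⟨w, rfl⟩ := Nat.exists_eq_add_of_le hρ
    have ha : a ∈ AddSubmonoid.closure {a, a + 1} := AddSubmonoid.subset_closure (by simp)
    have ha1 : a + 1 ∈ AddSubmonoid.closure {a, a + 1} := AddSubmonoid.subset_closure (by simp)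
    have key : (ρ + w) * a + ρ = w • a + ρ • (a + 1) := by simp only [smul_eq_mul]; ring
    rw [SetLike.mem_coe, key]
    exact add_mem (AddSubmonoid.nsmul_mem _ ha w) (AddSubmonoid.nsmul_mem _ ha1 ρ)

theorem orderGE_add_orderGE_zero (a j : ℕ) : orderGE a j + orderGE a 0 = orderGE a j :=
  (orderGE_add_subset a j 0).antisymm fun n hn => ⟨n, hn, 0, zero_mem_orderGE_zero a, rfl⟩

theorem orderGE_succ_subset (a j : ℕ) : orderGE a (j + 1) ⊆ orderGE a j + {a, a + 1} := by
  rintro _ ⟨u, ρ, hρ, hu, rfl⟩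
  obtain ⟨v, rfl⟩ : ∃ v, u = v + 1 := ⟨u - 1, by omega⟩
  rcases Nat.eq_zero_or_pos ρ with rfl | hρ0
  · exact ⟨v * a, ⟨v, 0, Nat.zero_le _, by omega, rfl⟩, a, by simp,
      show v * a + a = (v + 1) * a + 0 by ring⟩
  · exact ⟨v * a + (ρ - 1), ⟨v, ρ - 1, by omega, by omega, rfl⟩, a + 1, by simp,
      show v * a + (ρ - 1) + (a + 1) = (v + 1) * a + ρ by rw [add_mul, one_mul]; omega⟩

theorem eq_of_mul_add_eq_mul_add {u w ρ τ : ℕ} (hρ : ρ < a) (hτ : τ < a)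
    (h : u * a + ρ = w * a + τ) : u = w ∧ ρ = τ := by
  have ha : 0 < a := by omega
  have hdiv := congrArg (· / a) h
  have hmod := congrArg (· % a) h
  simp only [Nat.add_comm (u * a), Nat.add_comm (w * a), Nat.add_mul_div_right _ _ ha,
    Nat.add_mul_mod_self_right, Nat.div_eq_of_lt hρ, Nat.div_eq_of_lt hτ, Nat.mod_eq_of_lt hρ,
    Nat.mod_eq_of_lt hτ] at hdiv hmod
  omega

theorem mul_add_mem_orderGE_iff {u ρ j : ℕ} (hρ : ρ < a) :
    u * a + ρ ∈ orderGE a j ↔ ρ ≤ u ∧ j ≤ u := by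
  refine ⟨?_, fun ⟨h1, h2⟩ => ⟨u, ρ, h1, h2, rfl⟩⟩
  rintro ⟨v, σ, hσ, hj, h⟩
  have ha : 0 < a := by omega
  have hsplit : v * a + σ = (v + σ / a) * a + σ % a := by
    rw [add_mul, add_assoc, Nat.div_add_mod']
  obtain ⟨rfl, rfl⟩ := eq_of_mul_add_eq_mul_add hρ (Nat.mod_lt σ ha) (h.trans hsplit)
  exact ⟨(Nat.mod_le σ a).trans (hσ.trans (Nat.le_add_right _ _)), hj.trans (Nat.le_add_right _ _)⟩

theorem exists_mul_add (ha : 0 < a) (n : ℕ) : ∃ u ρ, ρ < a ∧ n = u * a + ρ :=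
  ⟨n / a, n % a, Nat.mod_lt n ha, (Nat.div_add_mod' n a).symm⟩

theorem le_of_mul_le_mul_add {u ρ j : ℕ} (hρ : ρ < a) (h : j * a ≤ u * a + ρ) : j ≤ u :=
  Nat.lt_succ_iff.mp (Nat.lt_of_mul_lt_mul_right (a := a) (by rw [Nat.succ_mul]; omega))

theorem mem_orderGE_of_le {n j : ℕ} (ha : 0 < a) (hj : a - 1 ≤ j) (hn : j * a ≤ n) :
    n ∈ orderGE a j := by
  obtain ⟨u, ρ, hρ, rfl⟩ := exists_mul_add ha n
  have hju := le_of_mul_le_mul_add hρ hn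
  exact (mul_add_mem_orderGE_iff hρ).mpr ⟨by omega, by omega⟩

theorem le_of_forall_add_mem_orderGE (ha : 0 < a) {b : ℕ} (h : ∀ i < a, b + i ∈ orderGE a 0) :
    (a - 1) * a ≤ b := by
  obtain ⟨u, ρ, hρ, rfl⟩ := exists_mul_add ha b
  have hmem := h (a - 1 - ρ) (by omega)
  rw [add_assoc, show ρ + (a - 1 - ρ) = a - 1 by omega, mul_add_mem_orderGE_iff (by omega)] at hmem
  exact (Nat.mul_le_mul_right a hmem.1).trans (Nat.le_add_right _ _)

theorem inter_Ici_eq_insert_orderGE {ℓ r j : ℕ} (hℓa : ℓ < a)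
    (hrj : r = 0 ∧ j = ℓ ∨ r = ℓ ∧ j = ℓ + 1) :
    orderGE a 0 ∩ Set.Ici (ℓ * a + r) = insert (ℓ * a + r) (orderGE a j) := by
  have ha : 0 < a := by omega
  have hr : r ≤ ℓ := by omega
  ext e
  simp only [Set.mem_inter_iff, Set.mem_Ici, Set.mem_insert_iff]
  constructor
  · rintro ⟨he, hse⟩
    obtain ⟨u, ρ, hρ, rfl⟩ := exists_mul_add ha e
    rw [mul_add_mem_orderGE_iff hρ] at he ⊢
    have hℓu : ℓ ≤ u := le_of_mul_le_mul_add hρ (by omega)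
    by_cases hju : j ≤ u
    · exact Or.inr ⟨he.1, hju⟩
    · left
      obtain rfl : u = ℓ := by omega
      omega
  · rintro (rfl | ⟨u, ρ, hρ, hju, rfl⟩)
    · exact ⟨⟨ℓ, r, hr, Nat.zero_le _, by ring⟩, le_rfl⟩
    · refine ⟨⟨u, ρ, hρ, Nat.zero_le _, rfl⟩, ?_⟩
      have : j * a ≤ u * a := Nat.mul_le_mul_right a hju
      rcases hrj with ⟨rfl, rfl⟩ | ⟨rfl, rfl⟩
      · omega
      · rw [add_mul, one_mul] at this
        omega

theorem mem_orderGE_of_add_mem {ℓ r j n h : ℕ} (hℓa : ℓ < a)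
    (hrj : r = 0 ∧ j = ℓ ∨ r = ℓ ∧ j = ℓ + 1) (hh : h ∈ orderGE a 0)
    (hm : ℓ * a + r + h ∈ orderGE a (j * (n + 1))) : h ∈ orderGE a (j * n) := by
  have ha : 0 < a := by omega
  obtain ⟨v, σ, hσ, rfl⟩ := exists_mul_add ha h
  rw [mul_add_mem_orderGE_iff hσ] at hh ⊢
  refine ⟨hh.1, ?_⟩
  rw [mul_add, mul_one] at hm
  by_cases hrσ : r + σ < a
  · rw [show ℓ * a + r + (v * a + σ) = (ℓ + v) * a + (r + σ) by ring,
      mul_add_mem_orderGE_iff hrσ] at hm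
    omega
  · -- the remainder `r + σ` overflows, which forces `r = ℓ` and `j = ℓ + 1`
    rw [show ℓ * a + r + (v * a + σ) = (ℓ + v + 1) * a + (r + σ - a) by
      rw [add_mul, add_mul, one_mul]; omega, mul_add_mem_orderGE_iff (by omega)] at hm
    omega

theorem not_inter_subset_of_pos_of_lt {ℓ r s : ℕ} (ha : a = 2 * ℓ + 1) (hs : s = ℓ * a + r)
    (hr0 : 0 < r) (hrℓ : r < ℓ) :
    ¬ ({s} + orderGE a 0) ∩ ((orderGE a 0 ∩ Set.Ici s) + (orderGE a 0 ∩ Set.Ici s) +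
        (orderGE a 0 ∩ Set.Ici s) + orderGE a 0) ⊆
      {s} + ((orderGE a 0 ∩ Set.Ici s) + (orderGE a 0 ∩ Set.Ici s)) + orderGE a 0 := by
  have hmem : ∀ {u ρ}, ρ < a → (u * a + ρ ∈ orderGE a 0 ↔ ρ ≤ u) := fun hρ => by
    rw [mul_add_mem_orderGE_iff hρ]; omega
  have hE : ∀ {δ}, δ ≤ ℓ - r → s + δ ∈ orderGE a 0 ∩ Set.Ici s := fun hδ =>
    ⟨by rw [hs, add_assoc]; exact (hmem (by omega)).mpr (by omega), by simp⟩
  have hc : (a - 1) * a = 2 * (ℓ * a) := by rw [ha, Nat.add_sub_cancel]; ring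
  intro hsub
  set m := (s + (ℓ - r)) + (s + (ℓ - r)) + (s + 1) with hm
  have hmQ : m ∈ {s} + orderGE a 0 :=
    ⟨s, rfl, m - s, orderGE_anti (Nat.zero_le _) (mem_orderGE_of_le (by omega) le_rfl (by omega)),
      show s + (m - s) = m by omega⟩
  have hmI : m ∈ (orderGE a 0 ∩ Set.Ici s) + (orderGE a 0 ∩ Set.Ici s) +
      (orderGE a 0 ∩ Set.Ici s) + orderGE a 0 :=
    ⟨m, ⟨_, ⟨_, hE le_rfl, _, hE le_rfl, rfl⟩, _, hE (by omega), rfl⟩, 0,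
      zero_mem_orderGE_zero a, add_zero m⟩
  have hsmall : ∀ {e}, e ∈ orderGE a 0 → s ≤ e → r + (e - s) < a → r + (e - s) ≤ ℓ :=
    fun {e} he hse hlt => (hmem hlt).mp (by rwa [show ℓ * a + (r + (e - s)) = e by omega])
  obtain ⟨_, ⟨x, hx, _, ⟨e₁, ⟨he₁, hse₁⟩, e₂, ⟨he₂, hse₂⟩, rfl⟩, rfl⟩, h, hh, hsum⟩ :=
    hsub ⟨hmQ, hmI⟩
  simp only [Set.mem_singleton_iff, Set.mem_Ici] at hx hse₁ hse₂ hsum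
  have hδ₁ := hsmall he₁ hse₁ (by omega)
  have hδ₂ := hsmall he₂ hse₂ (by omega)
  have hh0 : h ≤ 0 := (hmem (u := 0) (by omega)).mp (by rwa [zero_mul, zero_add])
  omega

end orderGE

namespace Ideal

theorem sup_pow_succ_le {R : Type*} [CommSemiring R] (Q J : Ideal R) (n : ℕ) :
    (Q ⊔ J) ^ (n + 1) ≤ Q * (Q ⊔ J) ^ n ⊔ J ^ (n + 1) := by
  induction n with
  | zero => simp
  | succ n ih =>
    calc (Q ⊔ J) ^ (n + 2) = (Q ⊔ J) ^ (n + 1) * (Q ⊔ J) := pow_succ _ _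
      _ ≤ (Q * (Q ⊔ J) ^ n ⊔ J ^ (n + 1)) * (Q ⊔ J) := mul_mono_left ih
      _ = Q * (Q ⊔ J) ^ (n + 1) ⊔ (Q * J ^ (n + 1) ⊔ J ^ (n + 2)) := by
        rw [sup_mul, mul_assoc, ← pow_succ, mul_sup (J ^ (n + 1)), mul_comm (J ^ (n + 1)) Q,
          ← pow_succ]
      _ ≤ Q * (Q ⊔ J) ^ (n + 1) ⊔ J ^ (n + 2) :=
        sup_le le_sup_left (sup_le (le_sup_of_le_left
          (mul_mono_right (pow_right_mono le_sup_right _))) le_sup_right)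

theorem inf_sup_pow_succ_eq {R : Type*} [CommRing R] {Q J : Ideal R} {n : ℕ}
    (h : Q ⊓ J ^ (n + 1) ≤ Q * J ^ n) :
    Q ⊓ (Q ⊔ J) ^ (n + 1) = Q * (Q ⊔ J) ^ n := by
  refine le_antisymm ?_ (le_inf mul_le_left ?_)
  · calc Q ⊓ (Q ⊔ J) ^ (n + 1) ≤ Q ⊓ (Q * (Q ⊔ J) ^ n ⊔ J ^ (n + 1)) :=
          inf_le_inf_left _ (sup_pow_succ_le Q J n)
      _ = Q * (Q ⊔ J) ^ n ⊔ Q ⊓ J ^ (n + 1) := by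
          rw [inf_comm, sup_inf_assoc_of_le _ mul_le_left, inf_comm]
      _ ≤ Q * (Q ⊔ J) ^ n :=
          sup_le le_rfl (h.trans (mul_mono_right (pow_right_mono le_sup_right n)))
  · rw [pow_succ']
    exact mul_mono_left le_sup_left

end Ideal

namespace ssr

variable {k : Type} [Field k] {H : AddSubmonoid ℕ}

def support (x : ssr k H) : Set ℕ := {n | coeff n (x : k⟦X⟧) ≠ 0}

theorem mem_support {x : ssr k H} {n : ℕ} : n ∈ support x ↔ coeff n (x : k⟦X⟧) ≠ 0 := Iff.rfl

theorem support_subset (x : ssr k H) : support x ⊆ (H : Set ℕ) :=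
  fun n hn => by_contra fun hnH => hn (x.2 n hnH)

theorem support_zero : support (0 : ssr k H) = ∅ :=
  Set.eq_empty_of_forall_notMem fun _ hn => hn (by simp)

theorem eq_zero_of_support_subset_empty {x : ssr k H} (hx : support x ⊆ ∅) : x = 0 := by
  ext n
  by_contra h
  exact hx h

theorem support_add_subset (x y : ssr k H) : support (x + y) ⊆ support x ∪ support y := by
  intro n hn
  by_contra h
  simp only [Set.mem_union, mem_support, not_or, not_not] at h
  exact hn (by simp [h.1, h.2])

theorem support_mul_subset (x y : ssr k H) : support (x * y) ⊆ support x + support y := by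
  intro n hn
  by_contra h
  refine hn ?_
  rw [Subalgebra.coe_mul, coeff_mul]
  refine Finset.sum_eq_zero fun ⟨i, j⟩ hij => ?_
  replace hij : i + j = n := by simpa using hij
  by_cases hi : coeff i (x : k⟦X⟧) = 0
  · rw [hi, zero_mul]
  · by_cases hj : coeff j (y : k⟦X⟧) = 0
    · rw [hj, mul_zero]
    · exact absurd (Set.add_mem_add hi hj) (hij ▸ h)

theorem coe_tp {n : ℕ} (hn : n ∈ H) : (tp k H n hn : k⟦X⟧) = X ^ n := rfl

theorem support_tp {n : ℕ} (hn : n ∈ H) : support (tp k H n hn) = {n} := by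
  ext m
  simp [mem_support, coe_tp, coeff_X_pow]

theorem tp_add {m n : ℕ} (hm : m ∈ H) (hn : n ∈ H) :
    tp k H (m + n) (H.add_mem hm hn) = tp k H m hm * tp k H n hn :=
  Subtype.ext (pow_add X m n)

theorem tp_zero : tp k H 0 H.zero_mem = 1 :=
  Subtype.ext (pow_zero X)

theorem coeff_mul_tp (x : ssr k H) {g : ℕ} (hg : g ∈ H) (n : ℕ) :
    coeff (n + g) ((x * tp k H g hg : ssr k H) : k⟦X⟧) = coeff n (x : k⟦X⟧) :=
  coeff_mul_X_pow (x : k⟦X⟧) g n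

/-- Dividing by `t^g` the part of `x` supported on `g + H`. -/
theorem exists_support_sub_tp_mul (x : ssr k H) {g : ℕ} (hg : g ∈ H) :
    ∃ y : ssr k H, support (x - tp k H g hg * y) = support x \ ({g} + (H : Set ℕ)) := by
  classical
  obtain ⟨y, hy⟩ : ∃ y : ssr k H,
      (y : k⟦X⟧) = mk fun m => if m ∈ H then coeff (g + m) (x : k⟦X⟧) else 0 :=
    ⟨⟨mk fun m => if m ∈ H then coeff (g + m) (x : k⟦X⟧) else 0,
      fun m hm => by rw [coeff_mk, if_neg hm]⟩, rfl⟩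
  refine ⟨y, Set.ext fun n => ?_⟩
  have hcoeff : coeff n ((x - tp k H g hg * y : ssr k H) : k⟦X⟧) =
      if n ∈ ({g} + (H : Set ℕ)) then 0 else coeff n (x : k⟦X⟧) := by
    rw [Subalgebra.coe_sub, Subalgebra.coe_mul, coe_tp, hy, map_sub, coeff_X_pow_mul',
      Set.singleton_add, Set.mem_image]
    by_cases hgn : g ≤ n
    · by_cases hH : n - g ∈ H
      · rw [if_pos hgn, coeff_mk, if_pos hH, if_pos ⟨n - g, hH, by omega⟩,
          Nat.add_sub_cancel' hgn, sub_self]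
      · rw [if_pos hgn, coeff_mk, if_neg hH, if_neg, sub_zero]
        rintro ⟨h, hh, rfl⟩
        exact hH (by simpa using hh)
    · rw [if_neg hgn, if_neg, sub_zero]
      rintro ⟨h, -, rfl⟩
      omega
  rw [mem_support, hcoeff, Set.mem_sdiff, mem_support]
  split_ifs with h <;> simp only [h, ne_eq, not_true_eq_false, and_false, not_false_eq_true,
    and_true]

variable (k H) in
noncomputable def monomialIdeal (G : Set ℕ) : Ideal (ssr k H) :=
  Ideal.span {x | ∃ g ∈ G, ∃ hg : g ∈ H, x = tp k H g hg}

variable {G F : Set ℕ}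

theorem tp_mem_monomialIdeal {g : ℕ} (hgG : g ∈ G) (hg : g ∈ H) :
    tp k H g hg ∈ monomialIdeal k H G :=
  Ideal.subset_span ⟨g, hgG, hg, rfl⟩

theorem tp_mem_monomialIdeal_of_mem_add (hG : G ⊆ H) {n : ℕ} (hn : n ∈ G + (H : Set ℕ))
    (hnH : n ∈ H) : tp k H n hnH ∈ monomialIdeal k H G := by
  obtain ⟨g, hgG, h, hh, rfl⟩ := hn
  rw [tp_add (hG hgG) hh]
  exact Ideal.mul_mem_right _ _ (tp_mem_monomialIdeal hgG _)

theorem monomialIdeal_mono (h : G ⊆ F) : monomialIdeal k H G ≤ monomialIdeal k H F :=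
  Ideal.span_mono fun _ ⟨g, hg, hgH, hx⟩ => ⟨g, h hg, hgH, hx⟩

theorem monomialIdeal_le_of_subset_add (hF : F ⊆ H) (h : G ⊆ F + (H : Set ℕ)) :
    monomialIdeal k H G ≤ monomialIdeal k H F :=
  Ideal.span_le.mpr fun _ ⟨_, hg, hgH, hx⟩ => hx ▸ tp_mem_monomialIdeal_of_mem_add hF (h hg) hgH

theorem monomialIdeal_union :
    monomialIdeal k H (G ∪ F) = monomialIdeal k H G ⊔ monomialIdeal k H F := by
  rw [monomialIdeal, monomialIdeal, monomialIdeal, ← Ideal.span_union]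
  congr 1
  ext x
  simp only [Set.mem_union, Set.mem_setOf_eq, or_and_right, exists_or]

theorem monomialIdeal_singleton {g : ℕ} (hg : g ∈ H) :
    monomialIdeal k H {g} = Ideal.span {tp k H g hg} := by
  rw [monomialIdeal]
  congr 1
  ext x
  simp only [Set.mem_singleton_iff, Set.mem_setOf_eq, exists_eq_left]
  exact ⟨fun ⟨_, hx⟩ => hx, fun hx => ⟨hg, hx⟩⟩

theorem monomialIdeal_insert {g : ℕ} (hg : g ∈ H) :
    monomialIdeal k H (insert g G) = Ideal.span {tp k H g hg} ⊔ monomialIdeal k H G := by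
  rw [Set.insert_eq, monomialIdeal_union, monomialIdeal_singleton hg]

theorem monomialIdeal_mul (hG : G ⊆ H) (hF : F ⊆ H) :
    monomialIdeal k H G * monomialIdeal k H F = monomialIdeal k H (G + F) := by
  rw [monomialIdeal, monomialIdeal, monomialIdeal, Ideal.span_mul_span']
  congr 1
  ext x
  constructor
  · rintro ⟨_, ⟨g, hgG, hg, rfl⟩, _, ⟨f, hfF, hf, rfl⟩, rfl⟩
    exact ⟨g + f, Set.add_mem_add hgG hfF, H.add_mem hg hf, (tp_add hg hf).symm⟩
  · rintro ⟨_, ⟨g, hgG, f, hfF, rfl⟩, hgf, rfl⟩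
    exact ⟨_, ⟨g, hgG, hG hgG, rfl⟩, _, ⟨f, hfF, hF hfF, rfl⟩, (tp_add _ _).symm⟩

theorem support_subset_of_mem_monomialIdeal {x : ssr k H}
    (hx : x ∈ monomialIdeal k H G) : support x ⊆ G + H := by
  induction hx using Submodule.span_induction with
  | mem x hx =>
    obtain ⟨g, hgG, hg, rfl⟩ := hx
    rw [support_tp]
    exact Set.singleton_subset_iff.mpr ⟨g, hgG, 0, H.zero_mem, add_zero g⟩
  | zero => simp [support_zero]
  | add x y _ _ hx hy => exact (support_add_subset x y).trans (Set.union_subset hx hy)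
  | smul a x _ hx =>
    calc support (a • x) ⊆ support a + support x := support_mul_subset a x
      _ ⊆ H + (G + H) := Set.add_subset_add (support_subset a) hx
      _ = G + H := by rw [add_left_comm, AddSubmonoid.coe_add_self_eq]

theorem mem_monomialIdeal_of_finite (hfin : G.Finite) (hG : G ⊆ H) {x : ssr k H}
    (hx : support x ⊆ G + H) : x ∈ monomialIdeal k H G := by
  induction G, hfin using Set.Finite.induction_on generalizing x with
  | empty => simp [eq_zero_of_support_subset_empty (by simpa using hx)]
  | @insert g G _ _ ih =>
    have hgH : g ∈ H := hG (Set.mem_insert g G)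
    obtain ⟨y, hy⟩ := exists_support_sub_tp_mul x hgH
    have hrest : x - tp k H g hgH * y ∈ monomialIdeal k H G := by
      refine ih ((Set.subset_insert g G).trans hG) ?_
      rw [hy, Set.sdiff_subset_iff]
      rwa [Set.insert_eq, Set.union_add] at hx
    rw [← sub_add_cancel x (tp k H g hgH * y)]
    exact add_mem (monomialIdeal_mono (Set.subset_insert g G) hrest)
      (Ideal.mul_mem_right _ _ (tp_mem_monomialIdeal (Set.mem_insert g G) hgH))

theorem mem_monomialIdeal_of_support_subset {c : ℕ} (hc : ∀ n, c ≤ n → n ∈ H) (hG : G ⊆ H)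
    {x : ssr k H} (hx : support x ⊆ G + H) : x ∈ monomialIdeal k H G := by
  rcases G.eq_empty_or_nonempty with rfl | ⟨g₀, hg₀⟩
  · simp [eq_zero_of_support_subset_empty (by simpa using hx)]
  -- a generator `g > g₀ + c` is redundant, since `g - g₀ ∈ H`
  have hfin : (G ∩ Set.Iic (g₀ + c)).Finite := (Set.finite_Iic _).inter_of_right _
  refine monomialIdeal_mono Set.inter_subset_left
    (mem_monomialIdeal_of_finite hfin (Set.inter_subset_left.trans hG) (hx.trans ?_))
  rintro _ ⟨g, hg, h, hh, rfl⟩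
  by_cases hgc : g ≤ g₀ + c
  · exact ⟨g, ⟨hg, hgc⟩, h, hh, rfl⟩
  · exact ⟨g₀, ⟨hg₀, by simp⟩, g - g₀ + h, H.add_mem (hc _ (by omega)) hh,
      show g₀ + (g - g₀ + h) = g + h by omega⟩

theorem inf_monomialIdeal_le_iff {c : ℕ} (hc : ∀ n, c ≤ n → n ∈ H) {A G B : Set ℕ}
    (hA : A ⊆ H) (hG : G ⊆ H) (hB : B ⊆ H) :
    monomialIdeal k H A ⊓ monomialIdeal k H G ≤ monomialIdeal k H B ↔
      (A + H) ∩ (G + H) ⊆ B + H := by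
  constructor
  · rintro h m ⟨hmA, hmG⟩
    have hmH : m ∈ H := by
      obtain ⟨x, hx, y, hy, rfl⟩ := hmA
      exact H.add_mem (hA hx) hy
    have hsupp := support_subset_of_mem_monomialIdeal
      (h ⟨tp_mem_monomialIdeal_of_mem_add hA hmA hmH, tp_mem_monomialIdeal_of_mem_add hG hmG hmH⟩)
    rw [support_tp] at hsupp
    exact hsupp rfl
  · rintro h x ⟨hxA, hxG⟩
    exact mem_monomialIdeal_of_support_subset hc hB fun n hn =>
      h ⟨support_subset_of_mem_monomialIdeal hxA hn, support_subset_of_mem_monomialIdeal hxG hn⟩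

section pairSemigroup

variable {a : ℕ} (hH : (H : Set ℕ) = orderGE a 0)
include hH

theorem mem_of_sub_one_mul_le (ha : 0 < a) {n : ℕ} (hn : (a - 1) * a ≤ n) : n ∈ H := by
  rw [← SetLike.mem_coe, hH]
  exact orderGE_anti (Nat.zero_le _) (mem_orderGE_of_le ha le_rfl hn)

theorem orderGE_subset (j : ℕ) : orderGE a j ⊆ H :=
  hH ▸ orderGE_anti (Nat.zero_le j)

theorem monomialIdeal_pair_pow (j : ℕ) :
    monomialIdeal k H {a, a + 1} ^ j = monomialIdeal k H (orderGE a j) := by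
  have hpair : {a, a + 1} ⊆ (H : Set ℕ) :=
    (pair_subset_orderGE_one a).trans (orderGE_subset hH 1)
  induction j with
  | zero =>
    rw [pow_zero, Ideal.one_eq_top, eq_comm, Ideal.eq_top_iff_one, ← tp_zero]
    exact tp_mem_monomialIdeal (zero_mem_orderGE_zero a) _
  | succ j ih =>
    rw [pow_succ, ih, monomialIdeal_mul (orderGE_subset hH j) hpair]
    refine le_antisymm (monomialIdeal_le_of_subset_add (orderGE_subset hH _) ?_)
      (monomialIdeal_le_of_subset_add (AddSubmonoid.add_subset (orderGE_subset hH j) hpair) ?_)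
    · exact ((Set.add_subset_add_left (pair_subset_orderGE_one a)).trans
        (orderGE_add_subset a j 1)).trans (Set.subset_add_left _ H.zero_mem)
    · exact (orderGE_succ_subset a j).trans (Set.subset_add_left _ H.zero_mem)

theorem colon_monomialIdeal_pair_pow (ha : 0 < a) {s : ℕ} (hs : s ∈ H) :
    Submodule.colon (monomialIdeal k H {s})
        ((monomialIdeal k H {a, a + 1} ^ (a - 1) : Ideal (ssr k H)) : Set (ssr k H)) =
      monomialIdeal k H (orderGE a 0 ∩ Set.Ici s) := by
  have hE : orderGE a 0 ∩ Set.Ici s ⊆ H := hH ▸ Set.inter_subset_left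
  rw [monomialIdeal_pair_pow hH]
  ext x
  rw [Submodule.mem_colon]
  constructor
  · intro hx
    refine mem_monomialIdeal_of_support_subset (fun _ => mem_of_sub_one_mul_le hH ha) hE
      fun n hn => Set.subset_add_left _ H.zero_mem ⟨hH ▸ support_subset x hn, ?_⟩
    have hshift : ∀ i < a, ∃ h ∈ H, s + h = n + ((a - 1) * a + i) := by
      intro i _
      have hci : (a - 1) * a + i ∈ H := mem_of_sub_one_mul_le hH ha (Nat.le_add_right _ _)
      obtain ⟨_, hs', h, hh, heq⟩ := support_subset_of_mem_monomialIdeal (hx _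
        (tp_mem_monomialIdeal (mem_orderGE_of_le ha le_rfl (Nat.le_add_right _ _)) hci))
        (show n + ((a - 1) * a + i) ∈ support _ by rwa [mem_support, smul_eq_mul, coeff_mul_tp])
      exact ⟨h, hh, Set.mem_singleton_iff.mp hs' ▸ heq⟩
    obtain ⟨h₀, -, hh₀⟩ := hshift 0 (by omega)
    have hrun := le_of_forall_add_mem_orderGE ha (b := h₀) fun i hi => by
      obtain ⟨h, hh, hsh⟩ := hshift i hi
      rw [← hH, show h₀ + i = h by omega]
      exact hh
    simp only [Set.mem_Ici]
    omega
  · intro hx y hy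
    rw [smul_eq_mul]
    have hxy : x * y ∈ monomialIdeal k H (orderGE a 0 ∩ Set.Ici s + orderGE a (a - 1)) :=
      monomialIdeal_mul (k := k) hE (orderGE_subset hH _) ▸ Ideal.mul_mem_mul hx hy
    refine monomialIdeal_le_of_subset_add (Set.singleton_subset_iff.mpr hs) ?_ hxy
    rintro _ ⟨e, ⟨-, hse⟩, f, hf, rfl⟩
    exact ⟨s, rfl, e - s + f, mem_of_sub_one_mul_le hH ha
      ((mul_le_of_mem_orderGE hf).trans (Nat.le_add_left _ _)),
      show s + (e - s + f) = e + f by simp only [Set.mem_Ici] at hse; omega⟩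

theorem monomialIdeal_inter_Ici_eq_sup {ℓ r j : ℕ} (hℓa : ℓ < a)
    (hrj : r = 0 ∧ j = ℓ ∨ r = ℓ ∧ j = ℓ + 1) :
    monomialIdeal k H (orderGE a 0 ∩ Set.Ici (ℓ * a + r)) =
      monomialIdeal k H {ℓ * a + r} ⊔ monomialIdeal k H {a, a + 1} ^ j := by
  rw [inter_Ici_eq_insert_orderGE hℓa hrj, Set.insert_eq, monomialIdeal_union,
    monomialIdeal_pair_pow hH]

theorem inf_pair_pow_pow_succ_le {ℓ r j : ℕ} (hℓa : ℓ < a)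
    (hrj : r = 0 ∧ j = ℓ ∨ r = ℓ ∧ j = ℓ + 1) (n : ℕ) :
    monomialIdeal k H {ℓ * a + r} ⊓ (monomialIdeal k H {a, a + 1} ^ j) ^ (n + 1) ≤
      monomialIdeal k H {ℓ * a + r} * (monomialIdeal k H {a, a + 1} ^ j) ^ n := by
  have hs : {ℓ * a + r} ⊆ (H : Set ℕ) :=
    hH ▸ Set.singleton_subset_iff.mpr ⟨ℓ, r, by omega, Nat.zero_le _, rfl⟩
  rw [← pow_mul, ← pow_mul, monomialIdeal_pair_pow hH, monomialIdeal_pair_pow hH,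
    monomialIdeal_mul hs (orderGE_subset hH _),
    inf_monomialIdeal_le_iff (fun _ => mem_of_sub_one_mul_le hH (by omega)) hs
      (orderGE_subset hH _) (AddSubmonoid.add_subset hs (orderGE_subset hH _)),
    hH, orderGE_add_orderGE_zero, add_assoc, orderGE_add_orderGE_zero]
  rintro _ ⟨⟨_, rfl, h, hh, rfl⟩, hm⟩
  exact ⟨_, rfl, h, mem_orderGE_of_add_mem hℓa hrj hh hm, rfl⟩

theorem inf_pow_three_ne {ℓ r : ℕ} (ha : a = 2 * ℓ + 1) (hr0 : 0 < r) (hrℓ : r < ℓ) :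
    monomialIdeal k H {ℓ * a + r} ⊓
        monomialIdeal k H (orderGE a 0 ∩ Set.Ici (ℓ * a + r)) ^ 3 ≠
      monomialIdeal k H {ℓ * a + r} *
        monomialIdeal k H (orderGE a 0 ∩ Set.Ici (ℓ * a + r)) ^ 2 := by
  intro h
  have hs : {ℓ * a + r} ⊆ (H : Set ℕ) :=
    hH ▸ Set.singleton_subset_iff.mpr ⟨ℓ, r, by omega, Nat.zero_le _, rfl⟩
  have hE : orderGE a 0 ∩ Set.Ici (ℓ * a + r) ⊆ H := hH ▸ Set.inter_subset_left
  have hEE := AddSubmonoid.add_subset hE hE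
  rw [pow_succ, sq, monomialIdeal_mul hE hE, monomialIdeal_mul hEE hE,
    monomialIdeal_mul hs hEE] at h
  refine not_inter_subset_of_pos_of_lt ha rfl hr0 hrℓ ?_
  have hsub := (inf_monomialIdeal_le_iff (fun _ => mem_of_sub_one_mul_le hH (by omega)) hs
    (AddSubmonoid.add_subset hEE hE) (AddSubmonoid.add_subset hs hEE)).mp h.le
  rwa [hH] at hsub

end pairSemigroup

end ssr

open ssr in
theorem stmt19_general (k : Type) [Field k] (a ℓ : ℕ) (haval : a = 2 * ℓ + 1)
    (H : AddSubmonoid ℕ) (hH : H = AddSubmonoid.closure {a, a + 1})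
    (haH : a ∈ H) (ha1H : a + 1 ∈ H)
    (r : ℕ) (hr : r ≤ ℓ)
    (s : ℕ) (hsval : s = a * ℓ + r) (hs : s ∈ H)
    (𝔪 : Ideal (ssr k H)) (h𝔪 : 𝔪 = Ideal.span {tp k H a haH, tp k H (a + 1) ha1H})
    (Q : Ideal (ssr k H)) (hQ : Q = Ideal.span {tp k H s hs})
    (I : Ideal (ssr k H)) (hI : I = Submodule.colon Q ((𝔪 ^ (a - 1) : Ideal (ssr k H)) : Set (ssr k H))) :
    (∀ n : ℕ, Q ⊓ I ^ (n + 1) = Q * I ^ n) ↔ (r = 0 ∨ r = ℓ) := by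
  have hH' : (H : Set ℕ) = orderGE a 0 := hH ▸ coe_closure_pair a
  rw [mul_comm] at hsval
  subst hsval
  have hQ' : Q = monomialIdeal k H {ℓ * a + r} := by rw [hQ, monomialIdeal_singleton hs]
  have h𝔪' : 𝔪 = monomialIdeal k H {a, a + 1} := by
    rw [h𝔪, Ideal.span_insert, monomialIdeal_insert haH, monomialIdeal_singleton ha1H]
  have hI' : I = monomialIdeal k H (orderGE a 0 ∩ Set.Ici (ℓ * a + r)) := by
    rw [hI, hQ', h𝔪', colon_monomialIdeal_pair_pow hH' (by omega) hs]
  constructor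
  · intro hCM
    by_contra hr'
    exact inf_pow_three_ne hH' haval (by omega) (by omega) (hQ' ▸ hI' ▸ hCM 2)
  · intro hr' n
    obtain ⟨j, hrj⟩ : ∃ j, r = 0 ∧ j = ℓ ∨ r = ℓ ∧ j = ℓ + 1 := by
      rcases hr' with h | h
      exacts [⟨ℓ, .inl ⟨h, rfl⟩⟩, ⟨ℓ + 1, .inr ⟨h, rfl⟩⟩]
    rw [hI', monomialIdeal_inter_Ici_eq_sup hH' (by omega) hrj, hQ']
    exact Ideal.inf_sup_pow_succ_eq (inf_pair_pow_pow_succ_le hH' (by omega) hrj n)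

/-- Corollary 3.10: for `a = 2ℓ+1 ≥ 5`, `s = aℓ + r` with `0 ≤ r ≤ ℓ`, the associated
graded ring `G(I)` of `I = (t^s) : 𝔪^{a-1}` is Cohen-Macaulay (equivalently,
`Q ∩ I^{n+1} = QI^n` for all `n`) if and only if `r = 0` or `r = ℓ`. -/
theorem stmt19 (k : Type) [Field k] (a ℓ : ℕ) (hℓ2 : 2 ≤ ℓ) (haval : a = 2 * ℓ + 1)
    (H : AddSubmonoid ℕ) (hH : H = AddSubmonoid.closure {a, a + 1})
    (haH : a ∈ H) (ha1H : a + 1 ∈ H)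
    (r : ℕ) (hr : r ≤ ℓ)
    (s : ℕ) (hsval : s = a * ℓ + r) (hs : s ∈ H)
    (𝔪 : Ideal (ssr k H)) (h𝔪 : 𝔪 = Ideal.span {tp k H a haH, tp k H (a + 1) ha1H})
    (Q : Ideal (ssr k H)) (hQ : Q = Ideal.span {tp k H s hs})
    (I : Ideal (ssr k H)) (hI : I = Submodule.colon Q ((𝔪 ^ (a - 1) : Ideal (ssr k H)) : Set (ssr k H))) :
    (∀ n : ℕ, Q ⊓ I ^ (n + 1) = Q * I ^ n) ↔ (r = 0 ∨ r = ℓ) :=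
  stmt19_general k a ℓ haval H hH haH ha1H r hr s hsval hs 𝔪 h𝔪 Q hQ I hI
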